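/- arXiv:0910.3879 — 2 statements merged into one kernel-verified Lean document; each statement's English description precedes it below -/
import Mathlib

section
/- Let A be a finite abelian group. Then μ(A) := ∑_{a ∈ A} 1/ord(a) = (1/|A|) · ∑_{l=1}^{|A|} |Hom(A, ℤ/lℤ)|, where |Hom(A, ℤ/lℤ)| denotes the number of group homomorphisms from A to ℤ/lℤ, and the equality is an equality of rational numbers. -/
/-!
Decomposing `A ≅ ∏ ZMod nᵢ`, both `|Hom(A, ℤ/lℤ)|` and the number of `l`-torsion points of `A`
equal `∏ gcd(nᵢ, l)`. Summing the latter over `1 ≤ l ≤ |A|` counts pairs `(a, l)` with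
`l • a = 0`; in the other order, `a` contributes the `|A| / ord(a)` multiples of `ord(a)`
in `[1, |A|]`.
-/

open Finset

noncomputable def ZMod.addMonoidHomEquivKerNsmul (n : ℕ) (M : Type*) [AddCommGroup M] :
    (ZMod n →+ M) ≃ (nsmulAddMonoidHom n : M →+ M).ker :=
  (ZMod.lift n).symm.trans <| Equiv.subtypeEquiv (zmultiplesHom M).symm fun f => by
    show f n = 0 ↔ n • f 1 = 0
    rw [← map_nsmul, nsmul_one]

theorem ZMod.card_addMonoidHom (n l : ℕ) [NeZero l] :
    Nat.card (ZMod n →+ ZMod l) = n.gcd l := by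
  rw [Nat.card_congr (ZMod.addMonoidHomEquivKerNsmul n (ZMod l)),
    IsAddCyclic.card_nsmulAddMonoidHom_ker, Nat.card_zmod, Nat.gcd_comm]

section KerNsmul

variable (l : ℕ)

def AddEquiv.kerNsmulEquiv {A B : Type*} [AddCommGroup A] [AddCommGroup B] (e : A ≃+ B) :
    (nsmulAddMonoidHom l : A →+ A).ker ≃ (nsmulAddMonoidHom l : B →+ B).ker :=
  e.toEquiv.subtypeEquiv fun a => by
    simp only [AddMonoidHom.mem_ker, nsmulAddMonoidHom_apply, AddEquiv.toEquiv_eq_coe,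
      EquivLike.coe_coe, ← map_nsmul, map_eq_zero_iff e e.injective]

def Pi.kerNsmulEquiv {ι : Type*} (G : ι → Type*) [∀ i, AddCommGroup (G i)] :
    (nsmulAddMonoidHom l : (∀ i, G i) →+ ∀ i, G i).ker ≃
      ∀ i, (nsmulAddMonoidHom l : G i →+ G i).ker :=
  (Equiv.subtypeEquivRight fun x => by
    simp only [AddMonoidHom.mem_ker, nsmulAddMonoidHom_apply, funext_iff, Pi.smul_apply,
      Pi.zero_apply]).trans
    (Equiv.subtypePiEquivPi (p := fun i (x : G i) => l • x = 0))

end KerNsmul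

theorem card_addMonoidHom_zmod_eq_card_ker_nsmul (A : Type*) [AddCommGroup A] [Finite A]
    (l : ℕ) [NeZero l] :
    Nat.card (A →+ ZMod l) = Nat.card (nsmulAddMonoidHom l : A →+ A).ker := by
  classical
  obtain ⟨ι, _, n, hn, ⟨e⟩⟩ := AddCommGroup.equiv_directSum_zmod_of_finite' A
  let e' : A ≃+ ∀ i, ZMod (n i) := e.trans (DirectSum.addEquivProd _)
  have : ∀ i, NeZero (n i) := fun i => ⟨(zero_lt_one.trans (hn i)).ne'⟩
  rw [Nat.card_congr (e'.addMonoidHomCongrLeftEquiv (N := ZMod l)),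
    Nat.card_congr (Pi.addMonoidHomAddEquiv (fun i => ZMod (n i)) (ZMod l)).toEquiv,
    Nat.card_congr ((e'.kerNsmulEquiv l).trans (Pi.kerNsmulEquiv l _)), Nat.card_pi, Nat.card_pi]
  refine prod_congr rfl fun i _ => ?_
  rw [ZMod.card_addMonoidHom, IsAddCyclic.card_nsmulAddMonoidHom_ker, Nat.card_zmod]

theorem sum_card_ker_nsmul_Icc (A : Type*) [AddCommGroup A] [Fintype A] :
    ∑ l ∈ Icc 1 (Fintype.card A), Nat.card (nsmulAddMonoidHom l : A →+ A).ker =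
      ∑ a : A, Fintype.card A / addOrderOf a := by
  classical
  calc ∑ l ∈ Icc 1 (Fintype.card A), Nat.card (nsmulAddMonoidHom l : A →+ A).ker
      = ∑ l ∈ Icc 1 (Fintype.card A), ∑ a : A, if addOrderOf a ∣ l then 1 else 0 := by
        refine sum_congr rfl fun l _ => ?_
        simp only [sum_boole, Nat.card_eq_fintype_card, Fintype.card_subtype,
          AddMonoidHom.mem_ker, nsmulAddMonoidHom_apply, addOrderOf_dvd_iff_nsmul_eq_zero,
          Nat.cast_id]
    _ = ∑ a : A, #{l ∈ Ioc 0 (Fintype.card A) | addOrderOf a ∣ l} := by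
        rw [sum_comm, ← Icc_add_one_left_eq_Ioc, zero_add]
        simp only [sum_boole, Nat.cast_id]
    _ = ∑ a : A, Fintype.card A / addOrderOf a := by
        simp only [Nat.Ioc_filter_dvd_card_eq_div]

/-- For a finite abelian group `A`,
`μ(A) := ∑_{a ∈ A} 1/ord(a) = (1/|A|) · ∑_{l=1}^{|A|} |Hom(A, ℤ/lℤ)|` in `ℚ`. -/
theorem stmt_3 (A : Type*) [AddCommGroup A] [Fintype A] :
    ∑ a : A, (1 : ℚ) / (addOrderOf a) =
      (1 / (Fintype.card A : ℚ)) *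
        ∑ l ∈ Finset.Icc 1 (Fintype.card A), (Nat.card (A →+ ZMod l) : ℚ) := by
  have card_hom (l) (hl : l ∈ Icc 1 (Fintype.card A)) :
      (Nat.card (A →+ ZMod l) : ℚ) = Nat.card (nsmulAddMonoidHom l : A →+ A).ker := by
    have : NeZero l := ⟨by grind⟩
    rw [card_addMonoidHom_zmod_eq_card_ker_nsmul]
  rw [sum_congr rfl card_hom, ← Nat.cast_sum, sum_card_ker_nsmul_Icc, Nat.cast_sum, mul_sum]
  refine sum_congr rfl fun a _ => ?_
  rw [Nat.cast_div addOrderOf_dvd_card (Nat.cast_ne_zero.mpr (addOrderOf_pos a).ne')]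
  field_simp
end

section
/- Let Γ be a finite abelian group with exponent l (the least common multiple of the orders of its elements), write G(m) := |Hom(Γ, ℤ/mℤ)| for m ≥ 1, and let w ≥ 1 be a natural number. Then for every integer j ≥ 0, the sum of the 'residue coefficients' arising from the Hurwitz zeta decomposition satisfies (1/l) · ∑_{k=1}^{l} G(k)^w = μ(Γ^w), i.e. the common residue factor appearing at each pole of the deformed modified Soulé-type zeta series equals μ(Γ^w) = ∑_{γ ∈ Γ^w} 1/ord(γ), where Γ^w is the direct product of w copies of Γ and the identity is an equality of rational numbers. -/
/-!
For a finite abelian group `B`, both `|Hom(B, ℤ/k)|` and the number of `k`-torsion points of `B`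
are multiplicative in direct sums and equal `gcd(n, k)` for `B = ℤ/n`, so by the structure
theorem they agree; in particular `G(k)^w` counts the `k`-torsion of `Γ^w`. Summing over
`k = 1, …, l` and exchanging the sums, each `γ` is counted once for every multiple of `ord γ`
in `[1, l]`, that is `l / ord γ` times, and `ord γ ∣ l`.
-/

open Finset

section Torsion

variable (k : ℕ)

theorem AddEquiv.card_nsmul_eq_zero {A B : Type*} [AddMonoid A] [AddMonoid B] (e : A ≃+ B) :
    Nat.card {a : A // k • a = 0} = Nat.card {b : B // k • b = 0} :=
  Nat.card_congr <| e.toEquiv.subtypeEquiv fun a => by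
    simp only [AddEquiv.toEquiv_eq_coe, EquivLike.coe_coe, ← map_nsmul, AddEquiv.map_eq_zero_iff]

theorem Pi.card_nsmul_eq_zero {ι : Type*} [Fintype ι] {A : ι → Type*} [∀ i, AddMonoid (A i)] :
    Nat.card {b : ∀ i, A i // k • b = 0} = ∏ i, Nat.card {a : A i // k • a = 0} := by
  rw [← Nat.card_pi]
  exact Nat.card_congr <|
    (Equiv.subtypeEquivRight fun b => funext_iff).trans
      (Equiv.subtypePiEquivPi (p := fun _ a => k • a = 0))

theorem ZMod.card_nsmul_eq_zero (n : ℕ) [NeZero n] :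
    Nat.card {x : ZMod n // k • x = 0} = n.gcd k := by
  have := IsAddCyclic.card_nsmulAddMonoidHom_ker (ZMod n) k
  rwa [Nat.card_zmod] at this

def ZMod.addMonoidHomEquivNsmulEqZero (n : ℕ) (A : Type*) [AddCommGroup A] :
    (ZMod n →+ A) ≃ {a : A // n • a = 0} :=
  (ZMod.lift n).symm.trans <| ((zmultiplesHom A).subtypeEquiv fun a => by
    simp [natCast_zsmul]).symm

theorem ZMod.card_addMonoidHom_eq_card_nsmul_eq_zero (n : ℕ) [NeZero n] [NeZero k] :
    Nat.card (ZMod n →+ ZMod k) = Nat.card {x : ZMod n // k • x = 0} := by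
  rw [Nat.card_congr (addMonoidHomEquivNsmulEqZero n (ZMod k)), card_nsmul_eq_zero,
    card_nsmul_eq_zero, Nat.gcd_comm]

theorem card_addMonoidHom_zmod_eq_card_nsmul_eq_zero (B : Type*) [AddCommGroup B] [Finite B]
    [NeZero k] : Nat.card (B →+ ZMod k) = Nat.card {b : B // k • b = 0} := by
  classical
  obtain ⟨ι, _, n, hn, ⟨e⟩⟩ := AddCommGroup.equiv_directSum_zmod_of_finite' B
  have : ∀ i, NeZero (n i) := fun i => NeZero.of_gt (hn i)
  let e' : B ≃+ ∀ i, ZMod (n i) := e.trans (DirectSum.addEquivProd _)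
  calc Nat.card (B →+ ZMod k)
      = ∏ i, Nat.card (ZMod (n i) →+ ZMod k) := by
        rw [← Nat.card_pi, Nat.card_congr e'.addMonoidHomCongrLeftEquiv,
          Nat.card_congr (Pi.addMonoidHomAddEquiv _ _).toEquiv]
    _ = ∏ i, Nat.card {x : ZMod (n i) // k • x = 0} := by
        simp only [ZMod.card_addMonoidHom_eq_card_nsmul_eq_zero]
    _ = Nat.card {b : B // k • b = 0} := by
        rw [← Pi.card_nsmul_eq_zero, e'.card_nsmul_eq_zero]

end Torsion

theorem sum_Icc_card_nsmul_eq_zero (B : Type*) [AddMonoid B] [Fintype B] (l : ℕ) :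
    ∑ k ∈ Icc 1 l, Nat.card {b : B // k • b = 0} = ∑ b : B, l / addOrderOf b := by
  classical
  simp only [Nat.card_eq_fintype_card, Fintype.card_subtype, card_filter]
  rw [sum_comm]
  refine sum_congr rfl fun b _ => ?_
  rw [← card_filter, ← Nat.Ioc_filter_dvd_card_eq_div, ← Icc_add_one_left_eq_Ioc, zero_add]
  simp only [addOrderOf_dvd_iff_nsmul_eq_zero]

theorem one_div_mul_sum_Icc_card_nsmul_eq_zero (B : Type*) [AddMonoid B] [Fintype B] {l : ℕ}
    (hl : l ≠ 0) (hB : AddMonoid.exponent B ∣ l) :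
    1 / (l : ℚ) * ∑ k ∈ Icc 1 l, (Nat.card {b : B // k • b = 0} : ℚ) =
      ∑ b : B, (1 : ℚ) / addOrderOf b := by
  rw [← Nat.cast_sum, sum_Icc_card_nsmul_eq_zero, Nat.cast_sum, mul_sum]
  refine sum_congr rfl fun b _ => ?_
  have hb : addOrderOf b ∣ l := (AddMonoid.addOrder_dvd_exponent b).trans hB
  have hb0 : (addOrderOf b : ℚ) ≠ 0 := by exact_mod_cast ne_zero_of_dvd_ne_zero hl hb
  rw [Nat.cast_div hb hb0]
  field_simp

theorem stmt_16_general (Γ : Type*) [AddCommGroup Γ] [Fintype Γ]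
    (l : ℕ) (hl : l = AddMonoid.exponent Γ)
    (G : ℕ → ℕ) (hG : ∀ m, 1 ≤ m → G m = Nat.card (Γ →+ ZMod m))
    (w : ℕ) :
    (1 / (l : ℚ)) * ∑ k ∈ Finset.Icc 1 l, (G k : ℚ) ^ w =
      ∑ γ : Fin w → Γ, (1 : ℚ) / (addOrderOf γ) := by
  have hl0 : l ≠ 0 := hl ▸ AddMonoid.exponent_ne_zero_of_finite
  have hGk : ∀ k ∈ Icc 1 l, (G k : ℚ) ^ w = Nat.card {b : Fin w → Γ // k • b = 0} := by
    intro k hk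
    have : NeZero k := NeZero.of_pos (mem_Icc.mp hk).1
    rw [hG k (mem_Icc.mp hk).1, card_addMonoidHom_zmod_eq_card_nsmul_eq_zero,
      Pi.card_nsmul_eq_zero, prod_const, card_univ, Fintype.card_fin, Nat.cast_pow]
  rw [sum_congr rfl hGk]
  refine one_div_mul_sum_Icc_card_nsmul_eq_zero _ hl0 ?_
  rw [AddMonoid.exponent_pi, hl]
  exact Finset.lcm_dvd fun _ _ => dvd_rfl

/-- for a finite abelian group `Γ` of exponent `l`, with
`G(m) = |Hom(Γ, ℤ/mℤ)|` and `w ≥ 1`, the common residue factor satisfies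
`(1/l) · ∑_{k=1}^{l} G(k)^w = μ(Γ^w) = ∑_{γ ∈ Γ^w} 1/ord(γ)` in `ℚ`. -/
theorem stmt_16 (Γ : Type*) [AddCommGroup Γ] [Fintype Γ]
    (l : ℕ) (hl : l = AddMonoid.exponent Γ)
    (G : ℕ → ℕ) (hG : ∀ m, 1 ≤ m → G m = Nat.card (Γ →+ ZMod m))
    (w : ℕ) (hw : 1 ≤ w) :
    (1 / (l : ℚ)) * ∑ k ∈ Finset.Icc 1 l, (G k : ℚ) ^ w =
      ∑ γ : Fin w → Γ, (1 : ℚ) / (addOrderOf γ) :=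
  stmt_16_general Γ l hl G hG w
end
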